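/- arXiv:1309.1330 — 2 statements merged into one kernel-verified Lean document; each statement's English description precedes it below -/
import Mathlib

section
/- Let f : ℝ² → ℝ be continuous and compactly supported. Then the elastic collision operator is non-positive on L²(ℝ²): ∫_{ℝ²} Q_el(f)(k) f(k) dk ≤ 0. -/
/-!
In polar coordinates `k = r σ` one has `Q_el(f)(r σ) = S(r) − 2π f(r σ)` with
`S(r) = ∫_{S¹} f(r τ) dτ`, so integrating over the circle of radius `r` gives
`∫_{S¹} Q_el(f)(r σ) f(r σ) dσ = S(r)² − 2π ∫_{S¹} f(r σ)² dσ`, which is `≤ 0` by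
Cauchy–Schwarz on a circle of length `2π`. Integrating against `r dr` gives the claim.
-/

open MeasureTheory Real

noncomputable section

/-- The point on the unit circle `S¹ ⊂ ℝ²` at angle `θ`. -/
def circ (θ : ℝ) : EuclideanSpace ℝ (Fin 2) :=
  (WithLp.equiv 2 (Fin 2 → ℝ)).symm ![Real.cos θ, Real.sin θ]

/-- Integral over the unit circle `S¹ ⊂ ℝ²` with respect to arclength measure,
parametrized by the angle. -/
def sphereIntegral (g : EuclideanSpace ℝ (Fin 2) → ℝ) : ℝ :=
  ∫ θ in (0:ℝ)..(2 * Real.pi), g (circ θ)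

/-- The elastic collision operator (parabolic band, unit scattering matrix):
`Q_el(f)(k) = ∫_{S¹} f(|k| σ) dσ − 2π f(k)`. -/
def Qel (f : EuclideanSpace ℝ (Fin 2) → ℝ) (k : EuclideanSpace ℝ (Fin 2)) : ℝ :=
  sphereIntegral (fun σ => f (‖k‖ • σ)) - 2 * Real.pi * f k

open Set

theorem continuous_circ : Continuous circ := by
  refine (PiLp.continuous_toLp 2 _).comp (continuous_pi fun i => ?_)
  fin_cases i <;> simp <;> fun_prop

theorem circ_periodic : Function.Periodic circ (2 * π) := fun θ => by
  simp [circ]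

theorem norm_circ (θ : ℝ) : ‖circ θ‖ = 1 := by
  simp [circ, EuclideanSpace.norm_eq, Fin.sum_univ_two]

theorem norm_smul_circ {r : ℝ} (hr : 0 ≤ r) (θ : ℝ) : ‖r • circ θ‖ = r := by
  rw [norm_smul, norm_circ, mul_one, Real.norm_of_nonneg hr]

theorem sphereIntegral_eq_setIntegral_Ioo (g : EuclideanSpace ℝ (Fin 2) → ℝ) :
    sphereIntegral g = ∫ θ in Ioo (-π) π, g (circ θ) := by
  have hper : Function.Periodic (fun θ => g (circ θ)) (2 * π) := fun θ => by
    simp only [circ_periodic θ]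
  rw [sphereIntegral, ← zero_add (2 * π), hper.intervalIntegral_add_eq 0 (-π),
    show -π + 2 * π = π by ring, intervalIntegral.integral_of_le (by linarith [pi_pos]),
    integral_Ioc_eq_integral_Ioo]

def measurableEquivProd : ℝ × ℝ ≃ᵐ EuclideanSpace ℝ (Fin 2) :=
  MeasurableEquiv.finTwoArrow.symm.trans (MeasurableEquiv.toLp 2 (Fin 2 → ℝ))

theorem measurePreserving_measurableEquivProd : MeasurePreserving measurableEquivProd :=
  (EuclideanSpace.volume_preserving_symm_measurableEquiv_toLp (Fin 2)).symm.comp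
    (volume_preserving_finTwoArrow ℝ).symm

theorem measurableEquivProd_polarCoord_symm (r θ : ℝ) :
    measurableEquivProd (polarCoord.symm (r, θ)) = r • circ θ := by
  ext i
  fin_cases i <;>
    simp [measurableEquivProd, circ, polarCoord, MeasurableEquiv.finTwoArrow]

theorem integrableOn_polarCoord_target {E : Type*} [NormedAddCommGroup E] [NormedSpace ℝ E]
    {F : ℝ × ℝ → E} (hF : Integrable F) :
    IntegrableOn (fun p : ℝ × ℝ => p.1 • F (polarCoord.symm p)) polarCoord.target := by
  have := (integrableOn_image_iff_integrableOn_abs_det_fderiv_smul volume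
    polarCoord.open_target.measurableSet
    (fun p _ => (hasFDerivAt_polarCoord_symm p).hasFDerivWithinAt)
    polarCoord.symm.injOn F).mp hF.integrableOn
  refine this.congr_fun (fun p hp => ?_) polarCoord.open_target.measurableSet
  dsimp only
  rw [det_fderivPolarCoordSymm, abs_of_pos hp.1]

theorem integral_eq_integral_Ioi_mul_sphereIntegral {F : EuclideanSpace ℝ (Fin 2) → ℝ}
    (hF : Integrable F) :
    ∫ k, F k = ∫ r in Ioi 0, r * sphereIntegral (fun σ => F (r • σ)) := by
  have hFe : Integrable (fun p => F (measurableEquivProd p)) :=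
    (measurePreserving_measurableEquivProd.integrable_comp_emb
      measurableEquivProd.measurableEmbedding).2 hF
  have hpolar := integrableOn_polarCoord_target hFe
  have htarget : polarCoord.target = Ioi (0:ℝ) ×ˢ Ioo (-π) π := rfl
  rw [htarget, Measure.volume_eq_prod] at hpolar
  calc ∫ k, F k = ∫ p : ℝ × ℝ, F (measurableEquivProd p) :=
        (measurePreserving_measurableEquivProd.integral_comp
          measurableEquivProd.measurableEmbedding F).symm
    _ = ∫ p in Ioi (0:ℝ) ×ˢ Ioo (-π) π, p.1 • F (measurableEquivProd (polarCoord.symm p)) :=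
        (integral_comp_polarCoord_symm _).symm
    _ = ∫ r in Ioi 0, ∫ θ in Ioo (-π) π, r * F (r • circ θ) := by
        rw [Measure.volume_eq_prod, setIntegral_prod _ hpolar]
        simp only [measurableEquivProd_polarCoord_symm, smul_eq_mul]
    _ = ∫ r in Ioi 0, r * sphereIntegral (fun σ => F (r • σ)) := by
        simp only [integral_const_mul, sphereIntegral_eq_setIntegral_Ioo]

theorem sq_integral_le_measureReal_mul_integral_sq {α : Type*} [MeasurableSpace α]
    {μ : Measure α} [IsFiniteMeasure μ] {g : α → ℝ} (hg : Integrable g μ)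
    (hg2 : Integrable (fun x => g x ^ 2) μ) :
    (∫ x, g x ∂μ) ^ 2 ≤ μ.real univ * ∫ x, g x ^ 2 ∂μ := by
  rcases eq_zero_or_neZero μ with rfl | _
  · simp
  have hμ : 0 < μ.real univ := by
    simp [measureReal_def, ENNReal.toReal_pos_iff, measure_lt_top, NeZero.ne μ]
  have jensen := (even_two.convexOn_pow (𝕜 := ℝ)).map_average_le (continuousOn_pow 2)
    isClosed_univ (by simp) hg hg2
  simp only [average_eq, smul_eq_mul, mul_pow] at jensen
  have := mul_le_mul_of_nonneg_left jensen (sq_nonneg (μ.real univ))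
  field_simp at this
  linarith

theorem sq_sphereIntegral_le {g : EuclideanSpace ℝ (Fin 2) → ℝ} (hg : Continuous g) :
    sphereIntegral g ^ 2 ≤ 2 * π * sphereIntegral (fun σ => g σ ^ 2) := by
  have hlen : volume.real (Ioc 0 (2 * π)) = 2 * π := by simp [pi_pos.le]
  have hgc : Continuous fun θ => g (circ θ) := hg.comp continuous_circ
  have hgc2 : Continuous fun θ => g (circ θ) ^ 2 := hgc.pow 2
  simp only [sphereIntegral, intervalIntegral.integral_of_le (by positivity : 0 ≤ 2 * π)]
  have := sq_integral_le_measureReal_mul_integral_sq (μ := volume.restrict (Ioc 0 (2 * π)))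
    hgc.integrableOn_Ioc hgc2.integrableOn_Ioc
  rwa [measureReal_restrict_apply_univ, hlen] at this

theorem continuous_Qel {f : EuclideanSpace ℝ (Fin 2) → ℝ} (hf : Continuous f) :
    Continuous (Qel f) := by
  have hS : Continuous fun r : ℝ => ∫ θ in (0:ℝ)..(2 * π), f (r • circ θ) :=
    intervalIntegral.continuous_parametric_intervalIntegral_of_continuous'
      (f := fun r θ => f (r • circ θ))
      (hf.comp (continuous_fst.smul (continuous_circ.comp continuous_snd))) _ _
  exact (hS.comp continuous_norm).sub (continuous_const.mul hf)

theorem Qel_smul_circ (f : EuclideanSpace ℝ (Fin 2) → ℝ) {r : ℝ} (hr : 0 ≤ r) (θ : ℝ) :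
    Qel f (r • circ θ) = sphereIntegral (fun σ => f (r • σ)) - 2 * π * f (r • circ θ) := by
  rw [Qel, norm_smul_circ hr]

theorem sphereIntegral_Qel_mul_self {f : EuclideanSpace ℝ (Fin 2) → ℝ} (hf : Continuous f)
    {r : ℝ} (hr : 0 ≤ r) :
    sphereIntegral (fun σ => Qel f (r • σ) * f (r • σ)) =
      sphereIntegral (fun σ => f (r • σ)) ^ 2 - 2 * π * sphereIntegral (fun σ => f (r • σ) ^ 2) := by
  have hg : Continuous fun θ => f (r • circ θ) := hf.comp (continuous_circ.const_smul r)
  have hg2 : Continuous fun θ => f (r • circ θ) ^ 2 := hg.pow 2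
  simp only [sphereIntegral, Qel_smul_circ f hr]
  rw [intervalIntegral.integral_congr (g := fun θ => (∫ θ in (0:ℝ)..2 * π, f (r • circ θ)) *
      f (r • circ θ) - 2 * π * f (r • circ θ) ^ 2) fun θ _ => by ring,
    intervalIntegral.integral_sub ((hg.intervalIntegrable _ _).const_mul _)
      ((hg2.intervalIntegrable _ _).const_mul _),
    intervalIntegral.integral_const_mul, intervalIntegral.integral_const_mul, sq]

/-- The elastic collision operator is non-positive on `L²(ℝ²)`. -/
theorem stmt_4 (f : EuclideanSpace ℝ (Fin 2) → ℝ)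
    (hf : Continuous f) (hfc : HasCompactSupport f) :
    ∫ k, Qel f k * f k ≤ 0 := by
  have hint : Integrable fun k => Qel f k * f k :=
    ((continuous_Qel hf).mul hf).integrable_of_hasCompactSupport hfc.mul_left
  rw [integral_eq_integral_Ioi_mul_sphereIntegral hint]
  refine setIntegral_nonpos measurableSet_Ioi fun r (hr : 0 < r) => ?_
  rw [sphereIntegral_Qel_mul_self hf hr.le]
  have := sq_sphereIntegral_le (g := fun σ => f (r • σ)) (hf.comp (continuous_const_smul r))
  exact mul_nonpos_of_nonneg_of_nonpos hr.le (by linarith)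
end
end

section
/- Let X be a real normed vector space, M ∈ X, and let Δt > 0, α > 0 and β > 1/2. Suppose the sequence (fⁿ)_{n≥0} in X satisfies the implicit BGK-penalized scheme (f^{n+1} − fⁿ)/Δt = ((1−β)/α)(M − fⁿ) + (β/α)(M − f^{n+1}) for all n ≥ 0. Then, with r = (1 + (Δt/α)(β−1)) / (1 + (Δt/α)β), one has f^{n+1} − M = r (fⁿ − M) for all n, hence fⁿ − M = rⁿ (f⁰ − M); moreover |r| < 1, so ‖fⁿ − M‖ = |r|ⁿ ‖f⁰ − M‖ → 0 as n → ∞, i.e., fⁿ converges geometrically to M. -/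
/-!
Clearing the denominators in the scheme gives `(1 + tβ)(f^{n+1} − M) = (1 + t(β − 1))(fⁿ − M)`
with `t = Δt/α`, so the deviation from equilibrium is multiplied by `r` at every step. Since
`t > 0`, `|r| < 1` amounts to `2 + t(2β − 1) > 0`, which holds for `β > 1/2`.
-/

open Filter

section BGKPenalization

variable {𝕜 X : Type*} [Field 𝕜] [AddCommGroup X] [Module 𝕜 X]

lemma bgk_penalized_step_sub_eq_smul {M f₀ f₁ : X} {Δt α β : 𝕜} (hΔt : Δt ≠ 0)
    (hden : 1 + (Δt / α) * β ≠ 0)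
    (hstep : Δt⁻¹ • (f₁ - f₀) = ((1 - β) / α) • (M - f₀) + (β / α) • (M - f₁)) :
    f₁ - M = ((1 + (Δt / α) * (β - 1)) / (1 + (Δt / α) * β)) • (f₀ - M) := by
  have hcleared : f₁ - f₀ = (Δt * (1 - β) / α) • (M - f₀) + (Δt * β / α) • (M - f₁) := by
    calc f₁ - f₀ = Δt • Δt⁻¹ • (f₁ - f₀) := by rw [smul_inv_smul₀ hΔt]
      _ = _ := by rw [hstep]; module
  have hkey : (1 + (Δt / α) * β) • (f₁ - M) = (1 + (Δt / α) * (β - 1)) • (f₀ - M) := by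
    linear_combination (norm := module) hcleared
  rw [div_eq_inv_mul, ← smul_smul, ← hkey, inv_smul_smul₀ hden]

end BGKPenalization

lemma pow_smul_of_forall_succ_eq_smul {R X : Type*} [Monoid R] [MulAction R X] {u : ℕ → X}
    {r : R} (h : ∀ n, u (n + 1) = r • u n) (n : ℕ) : u n = r ^ n • u 0 := by
  induction n with
  | zero => simp
  | succ n ih => rw [h n, ih, smul_smul, ← pow_succ']

lemma abs_bgk_amplification_lt_one {t β : ℝ} (ht : 0 < t) (hβ : 1 / 2 < β) :
    |(1 + t * (β - 1)) / (1 + t * β)| < 1 := by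
  have hden : 0 < 1 + t * β := by nlinarith
  rw [abs_div, abs_of_pos hden, div_lt_one hden, abs_lt]
  constructor <;> nlinarith

/-- Geometric convergence to equilibrium of the implicit BGK-penalized IMEX scheme
`(f^{n+1} − fⁿ)/Δt = ((1−β)/α)(M − fⁿ) + (β/α)(M − f^{n+1})` for `β > 1/2`. -/
theorem stmt_18 {X : Type*} [NormedAddCommGroup X] [NormedSpace ℝ X]
    (M : X) (Δt α β : ℝ) (hΔt : 0 < Δt) (hα : 0 < α) (hβ : 1/2 < β)
    (f : ℕ → X)
    (hscheme : ∀ n : ℕ,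
      Δt⁻¹ • (f (n+1) - f n) = ((1 - β)/α) • (M - f n) + (β/α) • (M - f (n+1)))
    (r : ℝ) (hr : r = (1 + (Δt/α) * (β - 1)) / (1 + (Δt/α) * β)) :
    (∀ n : ℕ, f (n+1) - M = r • (f n - M)) ∧
      (∀ n : ℕ, f n - M = r ^ n • (f 0 - M)) ∧
      |r| < 1 ∧
      (∀ n : ℕ, ‖f n - M‖ = |r| ^ n * ‖f 0 - M‖) ∧
      Tendsto (fun n : ℕ => ‖f n - M‖) atTop (nhds 0) := by
  have ht : 0 < Δt / α := div_pos hΔt hα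
  have hden : 1 + (Δt / α) * β ≠ 0 := by nlinarith
  have hstep (n : ℕ) : f (n + 1) - M = r • (f n - M) :=
    hr ▸ bgk_penalized_step_sub_eq_smul hΔt.ne' hden (hscheme n)
  have hgeom := pow_smul_of_forall_succ_eq_smul (u := fun n => f n - M) hstep
  have hr_lt : |r| < 1 := hr ▸ abs_bgk_amplification_lt_one ht hβ
  have hnorm (n : ℕ) : ‖f n - M‖ = |r| ^ n * ‖f 0 - M‖ := by
    rw [hgeom n, norm_smul, norm_pow, Real.norm_eq_abs]
  refine ⟨hstep, hgeom, hr_lt, hnorm, ?_⟩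
  simpa only [← hnorm, zero_mul] using
    (tendsto_pow_atTop_nhds_zero_of_lt_one (abs_nonneg r) hr_lt).mul_const ‖f 0 - M‖
end
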